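/- arXiv:1311.2503 — 3 statements merged into one kernel-verified Lean document; each statement's English description precedes it below -/
import Mathlib

section
/- Let C be a real symmetric n×n positive semidefinite matrix whose r-th smallest eigenvalue is strictly less than its (r+1)-th smallest eigenvalue. If A and B are two orthogonal matrices in O(n) that both diagonalize C with the r smallest eigenvalues placed in the upper-left block (i.e., A^T C A and B^T C B are both diagonal with eigenvalues sorted so the r smallest come first), then there exists à ∈ O(r, n−r) with A = B Ã. -/
/-!
Put `M = Bᵀ A`, so that `A = B M`. Both `A` and `B` diagonalize `C` to the same `D = diagonal lam`,
hence `M` commutes with `D`, i.e. `M i j * (lam j - lam i) = 0`. The spectral gap makes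
`lam i ≠ lam j` whenever exactly one of `i, j` lies among the first `r` indices, so `M` is block
diagonal, and its diagonal blocks inherit orthogonality from `M`.
-/

open Matrix

namespace Matrix

variable {p R : Type*}

theorem apply_eq_zero_of_mul_diagonal_eq_diagonal_mul [CommRing R] [NoZeroDivisors R]
    [Fintype p] [DecidableEq p] {M : Matrix p p R} {d : p → R}
    (h : M * diagonal d = diagonal d * M) {i j : p} (hij : d i ≠ d j) : M i j = 0 := by
  have hentry : M i j * d j = d i * M i j := by
    simpa only [mul_diagonal, diagonal_mul] using congrFun (congrFun h i) j
  have hprod : M i j * (d j - d i) = 0 := by linear_combination hentry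
  exact (mul_eq_zero.mp hprod).resolve_right (sub_ne_zero.mpr hij.symm)

theorem transpose_mul_mul_diagonal_comm [Semiring R] [Fintype p] [DecidableEq p]
    {A B C : Matrix p p R} {d : p → R}
    (hA : A * Aᵀ = 1) (hB : B * Bᵀ = 1)
    (hAdiag : Aᵀ * C * A = diagonal d) (hBdiag : Bᵀ * C * B = diagonal d) :
    Bᵀ * A * diagonal d = diagonal d * (Bᵀ * A) := by
  calc Bᵀ * A * diagonal d = Bᵀ * (A * Aᵀ) * C * A := by simp only [← hAdiag, Matrix.mul_assoc]
    _ = Bᵀ * C * (B * Bᵀ) * A := by rw [hA, hB, Matrix.mul_one, Matrix.mul_one]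
    _ = diagonal d * (Bᵀ * A) := by simp only [← hBdiag, Matrix.mul_assoc]

variable {l m : Type*}

theorem eq_reindex_fromBlocks_of_offDiag_eq_zero [Zero R] (e : l ⊕ m ≃ p) {M : Matrix p p R}
    (h₁₂ : ∀ i j, M (e (.inl i)) (e (.inr j)) = 0)
    (h₂₁ : ∀ i j, M (e (.inr i)) (e (.inl j)) = 0) :
    M = reindex e e (fromBlocks (M.submatrix (e ∘ .inl) (e ∘ .inl)) 0 0
      (M.submatrix (e ∘ .inr) (e ∘ .inr))) := by
  rw [← (reindex e e).symm_apply_eq]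
  ext (i | i) (j | j) <;> simp [h₁₂, h₂₁]

theorem transpose_mul_self_eq_one_of_reindex_fromBlocks [CommRing R] [Fintype l] [Fintype m]
    [DecidableEq l] [DecidableEq m] [Fintype p] [DecidableEq p] (e : l ⊕ m ≃ p)
    {X : Matrix l l R} {Y : Matrix m m R}
    (h : (reindex e e (fromBlocks X 0 0 Y))ᵀ * reindex e e (fromBlocks X 0 0 Y) = 1) :
    Xᵀ * X = 1 ∧ Yᵀ * Y = 1 := by
  replace h : (fromBlocks X 0 0 Y)ᵀ * fromBlocks X 0 0 Y = 1 := by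
    simpa [transpose_reindex, submatrix_mul_equiv] using congrArg (reindex e.symm e.symm) h
  rw [fromBlocks_transpose, fromBlocks_multiply, ← fromBlocks_one] at h
  simp only [Matrix.mul_zero, Matrix.zero_mul, transpose_zero, add_zero, zero_add] at h
  obtain ⟨hX, -, -, hY⟩ := fromBlocks_inj.mp h
  exact ⟨hX, hY⟩

end Matrix

theorem stmt8_general (n r : ℕ) (hrn : r ≤ n)
    (C : Matrix (Fin n) (Fin n) ℝ)
    (lam : Fin n → ℝ)
    (hgap : ∀ i j : Fin n, (i : ℕ) < r → r ≤ (j : ℕ) → lam i < lam j)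
    (A B : Matrix (Fin n) (Fin n) ℝ)
    (hA : Aᵀ * A = 1) (hA' : A * Aᵀ = 1)
    (hB' : B * Bᵀ = 1)
    (hAdiag : Aᵀ * C * A = Matrix.diagonal lam)
    (hBdiag : Bᵀ * C * B = Matrix.diagonal lam) :
    ∃ (Arr : Matrix (Fin r) (Fin r) ℝ) (Ass : Matrix (Fin (n - r)) (Fin (n - r)) ℝ),
      Arrᵀ * Arr = 1 ∧ Assᵀ * Ass = 1 ∧
      A = B * Matrix.reindex (finSumFinEquiv.trans (finCongr (Nat.add_sub_cancel' hrn)))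
            (finSumFinEquiv.trans (finCongr (Nat.add_sub_cancel' hrn)))
            (Matrix.fromBlocks Arr 0 0 Ass) := by
  set e : Fin r ⊕ Fin (n - r) ≃ Fin n := finSumFinEquiv.trans (finCongr (Nat.add_sub_cancel' hrn))
  have hcomm := transpose_mul_mul_diagonal_comm hA' hB' hAdiag hBdiag
  have hgap' (i : Fin r) (j : Fin (n - r)) : lam (e (.inl i)) < lam (e (.inr j)) :=
    hgap _ _ (by simp [e]) (by simp [e])
  have hblock := eq_reindex_fromBlocks_of_offDiag_eq_zero e
    (fun i j ↦ apply_eq_zero_of_mul_diagonal_eq_diagonal_mul hcomm (hgap' i j).ne)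
    (fun i j ↦ apply_eq_zero_of_mul_diagonal_eq_diagonal_mul hcomm (hgap' j i).ne')
  have horth : (Bᵀ * A)ᵀ * (Bᵀ * A) = 1 := by
    rw [transpose_mul, transpose_transpose, Matrix.mul_assoc, ← Matrix.mul_assoc B, hB',
      Matrix.one_mul, hA]
  rw [hblock] at horth
  obtain ⟨hX, hY⟩ := transpose_mul_self_eq_one_of_reindex_fromBlocks e horth
  refine ⟨_, _, hX, hY, ?_⟩
  rw [← hblock, ← Matrix.mul_assoc, hB', Matrix.one_mul]

/-- Lemma 1: Let C be real symmetric PSD with eigenvalues λ sorted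
nondecreasingly and with a strict gap between the r smallest and the rest. If orthogonal
A and B both diagonalize C with the r smallest eigenvalues in the upper-left block, then
A = B Ã for some Ã ∈ O(r, n−r) (block-diagonal orthogonal). -/
theorem stmt8 (n r : ℕ) (hrn : r ≤ n)
    (C : Matrix (Fin n) (Fin n) ℝ) (hC : C.PosSemidef)
    (lam : Fin n → ℝ) (hmono : Monotone lam)
    (hgap : ∀ i j : Fin n, (i : ℕ) < r → r ≤ (j : ℕ) → lam i < lam j)
    (A B : Matrix (Fin n) (Fin n) ℝ)
    (hA : Aᵀ * A = 1) (hA' : A * Aᵀ = 1)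
    (hB : Bᵀ * B = 1) (hB' : B * Bᵀ = 1)
    (hAdiag : Aᵀ * C * A = Matrix.diagonal lam)
    (hBdiag : Bᵀ * C * B = Matrix.diagonal lam) :
    ∃ (Arr : Matrix (Fin r) (Fin r) ℝ) (Ass : Matrix (Fin (n - r)) (Fin (n - r)) ℝ),
      Arrᵀ * Arr = 1 ∧ Assᵀ * Ass = 1 ∧
      A = B * Matrix.reindex (finSumFinEquiv.trans (finCongr (Nat.add_sub_cancel' hrn)))
            (finSumFinEquiv.trans (finCongr (Nat.add_sub_cancel' hrn)))
            (Matrix.fromBlocks Arr 0 0 Ass) :=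
  stmt8_general n r hrn C lam hgap A B hA hA' hB' hAdiag hBdiag
end

section
/- The linear autoregressive model class G = {ζ ↦ B ζ : B ∈ R^{n×np}} is information consistent: for every A ∈ O(n), r ≤ n, the optimal prediction error of the reduced signal A_r^T z predicted from its own history is at least the error of predicting A_r^T z as the first r components of the full-dimensional optimal prediction based on the history of the full signal A^T z. Formally, ⟨‖A_r^T z − B_z(A_r) vec(hist of A_r^T z)‖²⟩ ≥ ⟨‖A_r^T z − I_r^T B_z(A) vec(hist of A^T z)‖²⟩, where B_z(·) denotes the least-squares optimal coefficient matrix. -/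
open Matrix Kronecker

/-- `Ecol n r` is the n×r matrix whose columns are the first r standard basis vectors of ℝⁿ. -/
def Ecol (n r : ℕ) : Matrix (Fin n) (Fin r) ℝ :=
  Matrix.of fun i j => if (i : ℕ) = (j : ℕ) then 1 else 0

/-- vec of the p-step history of a signal. -/
def zetaHist (p : ℕ) {k : ℕ} (m : ℤ → Fin k → ℝ) (t : ℤ) : Fin p × Fin k → ℝ :=
  fun q => m (t - ((q.1 : ℕ) + 1)) q.2

/-- underline(M) := I_p ⊗ M. -/
def underline (p : ℕ) {n k : ℕ} (M : Matrix (Fin n) (Fin k) ℝ) :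
    Matrix (Fin p × Fin n) (Fin p × Fin k) ℝ :=
  (1 : Matrix (Fin p) (Fin p) ℝ) ⊗ₖ M

/-- Least-squares autoregressive coefficient matrix for the reduced signal Mᵀ z:
B_z(M) = Mᵀ ⟨z ζᵀ⟩ underline(M) (underline(M)ᵀ ⟨ζ ζᵀ⟩ underline(M))⁻¹. -/
noncomputable def Bcoef (T : Finset ℤ) (p : ℕ) {n k : ℕ} (z : ℤ → Fin n → ℝ)
    (M : Matrix (Fin n) (Fin k) ℝ) : Matrix (Fin k) (Fin p × Fin k) ℝ :=
  Mᵀ * ((T.card : ℝ)⁻¹ • ∑ t ∈ T, Matrix.vecMulVec (z t) (zetaHist p z t)) * underline p M *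
    ((underline p M)ᵀ *
      ((T.card : ℝ)⁻¹ • ∑ t ∈ T, Matrix.vecMulVec (zetaHist p z t) (zetaHist p z t)) *
      underline p M)⁻¹

/-- Generic least-squares optimality: if `Mstar` satisfies the normal equations, then its
prediction error is minimal among all linear predictors. -/
lemma ls_opt {ι κ : Type*} [Fintype ι] [Fintype κ] (T : Finset ℤ)
    (y : ℤ → ι → ℝ) (ζ : ℤ → κ → ℝ) (Mstar M : Matrix ι κ ℝ)
    (hM : Mstar * (∑ t ∈ T, vecMulVec (ζ t) (ζ t)) = ∑ t ∈ T, vecMulVec (y t) (ζ t)) :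
    ∑ t ∈ T, ∑ i, (y t i - M.mulVec (ζ t) i) ^ 2
      ≥ ∑ t ∈ T, ∑ i, (y t i - Mstar.mulVec (ζ t) i) ^ 2 := by
  have key : ∀ i j, ∑ t ∈ T, (y t i - Mstar.mulVec (ζ t) i) * ζ t j = 0 := by
    intro i j
    have h := congrFun (congrFun hM i) j
    simp only [Matrix.mul_apply, Matrix.sum_apply, vecMulVec_apply] at h
    simp only [Matrix.mulVec, dotProduct, sub_mul, Finset.sum_sub_distrib, Finset.sum_mul]
    rw [sub_eq_zero, ← h, Finset.sum_comm]
    refine Finset.sum_congr rfl fun k _ => ?_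
    rw [Finset.mul_sum]
    exact Finset.sum_congr rfl fun s _ => by ring
  have expand : ∀ t i, (y t i - M.mulVec (ζ t) i) ^ 2
      = (y t i - Mstar.mulVec (ζ t) i) ^ 2
        + 2 * ((y t i - Mstar.mulVec (ζ t) i) * ((Mstar - M).mulVec (ζ t) i))
        + ((Mstar - M).mulVec (ζ t) i) ^ 2 := by
    intro t i
    rw [Matrix.sub_mulVec]
    simp only [Pi.sub_apply]
    ring
  have cross : ∑ t ∈ T, ∑ i, (y t i - Mstar.mulVec (ζ t) i) * ((Mstar - M).mulVec (ζ t) i) = 0 := by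
    have h2 : ∀ t i, (y t i - Mstar.mulVec (ζ t) i) * ((Mstar - M).mulVec (ζ t) i)
        = ∑ j, (Mstar - M) i j * ((y t i - Mstar.mulVec (ζ t) i) * ζ t j) := by
      intro t i
      simp only [Matrix.mulVec, dotProduct, Finset.mul_sum]
      congr 1; ext j; ring
    simp only [h2]
    rw [Finset.sum_comm]
    refine Finset.sum_eq_zero fun i _ => ?_
    rw [Finset.sum_comm]
    refine Finset.sum_eq_zero fun j _ => ?_
    rw [← Finset.mul_sum, key i j, mul_zero]
  calc ∑ t ∈ T, ∑ i, (y t i - M.mulVec (ζ t) i) ^ 2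
      = ∑ t ∈ T, ∑ i, ((y t i - Mstar.mulVec (ζ t) i) ^ 2
          + 2 * ((y t i - Mstar.mulVec (ζ t) i) * ((Mstar - M).mulVec (ζ t) i))
          + ((Mstar - M).mulVec (ζ t) i) ^ 2) := by
        simp only [expand]
    _ = (∑ t ∈ T, ∑ i, (y t i - Mstar.mulVec (ζ t) i) ^ 2)
          + 2 * (∑ t ∈ T, ∑ i, (y t i - Mstar.mulVec (ζ t) i) * ((Mstar - M).mulVec (ζ t) i))
          + ∑ t ∈ T, ∑ i, ((Mstar - M).mulVec (ζ t) i) ^ 2 := by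
        simp only [Finset.sum_add_distrib, Finset.mul_sum]
    _ ≥ ∑ t ∈ T, ∑ i, (y t i - Mstar.mulVec (ζ t) i) ^ 2 := by
        rw [cross]
        have : (0:ℝ) ≤ ∑ t ∈ T, ∑ i, ((Mstar - M).mulVec (ζ t) i) ^ 2 :=
          Finset.sum_nonneg fun t _ => Finset.sum_nonneg fun i _ => sq_nonneg _
        linarith

/-- The history of the reduced signal `Mᵀ z` is `(underline p M)ᵀ` applied to the
history of `z`. -/
lemma hist_eq {n p k : ℕ} (z : ℤ → Fin n → ℝ) (M : Matrix (Fin n) (Fin k) ℝ) (t : ℤ) :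
    zetaHist p (fun s => Mᵀ.mulVec (z s)) t = (underline p M)ᵀ.mulVec (zetaHist p z t) := by
  funext q
  simp [zetaHist, underline, Matrix.mulVec, dotProduct, Matrix.transpose_apply,
    kroneckerMap_apply, Fintype.sum_prod_type, Matrix.one_apply, Finset.sum_comm,
    ite_mul, Finset.sum_ite_eq']

lemma underline_mul_transpose {n p : ℕ} (A : Matrix (Fin n) (Fin n) ℝ) (hA' : A * Aᵀ = 1) :
    underline p A * (underline p A)ᵀ = 1 := by
  rw [underline, ← kroneckerMap_transpose, Matrix.transpose_one, ← Matrix.mul_kronecker_mul,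
    Matrix.mul_one, hA', Matrix.one_kronecker_one]

lemma underline_transpose_mul {n p : ℕ} (A : Matrix (Fin n) (Fin n) ℝ) (hA : Aᵀ * A = 1) :
    (underline p A)ᵀ * underline p A = 1 := by
  rw [underline, ← kroneckerMap_transpose, Matrix.transpose_one, ← Matrix.mul_kronecker_mul,
    Matrix.mul_one, hA, Matrix.one_kronecker_one]

lemma vecMulVec_mulVec' {ι κ μ : Type*} [Fintype κ] (M : Matrix ι κ ℝ) (v : κ → ℝ) (w : μ → ℝ) :
    vecMulVec (M.mulVec v) w = M * vecMulVec v w := by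
  ext i j
  simp [vecMulVec_apply, Matrix.mul_apply, Matrix.mulVec, dotProduct, Finset.sum_mul, mul_assoc]

/-- information consistency of the linear autoregressive model: for A ∈ O(n)
and r ≤ n, the optimal error of predicting A_rᵀ z from its own history is at least the error
of predicting A_rᵀ z as the first r components of the optimal full-dimensional prediction
based on the history of Aᵀ z. -/
theorem stmt11 (n p r : ℕ) (hrn : r ≤ n) (T : Finset ℤ) (hT : T.Nonempty)
    (z : ℤ → Fin n → ℝ)
    (A : Matrix (Fin n) (Fin n) ℝ) (hA : Aᵀ * A = 1) (hA' : A * Aᵀ = 1)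
    (hinvFull : IsUnit ((T.card : ℝ)⁻¹ •
        ∑ t ∈ T, Matrix.vecMulVec (zetaHist p z t) (zetaHist p z t)).det)
    (hinvRed : IsUnit (((underline p (A * Ecol n r))ᵀ *
        ((T.card : ℝ)⁻¹ • ∑ t ∈ T, Matrix.vecMulVec (zetaHist p z t) (zetaHist p z t)) *
        underline p (A * Ecol n r)).det)) :
    (T.card : ℝ)⁻¹ * ∑ t ∈ T, ∑ i,
        ((A * Ecol n r)ᵀ.mulVec (z t) i -
          (Bcoef T p z (A * Ecol n r)).mulVec
            (zetaHist p (fun s => (A * Ecol n r)ᵀ.mulVec (z s)) t) i) ^ 2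
      ≥ (T.card : ℝ)⁻¹ * ∑ t ∈ T, ∑ i,
        ((A * Ecol n r)ᵀ.mulVec (z t) i -
          (Ecol n r)ᵀ.mulVec ((Bcoef T p z A).mulVec
            (zetaHist p (fun s => Aᵀ.mulVec (z s)) t)) i) ^ 2 := by
  have hc0 : (T.card : ℝ) ≠ 0 := Nat.cast_ne_zero.mpr (Finset.card_ne_zero_of_mem hT.choose_spec)
  have hc : ((T.card : ℝ)⁻¹ : ℝ) ≠ 0 := inv_ne_zero hc0
  set c : ℝ := (T.card : ℝ)⁻¹ with hcdef
  set ζ : ℤ → Fin p × Fin n → ℝ := zetaHist p z with hζ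
  set Sz : Matrix (Fin p × Fin n) (Fin p × Fin n) ℝ := ∑ t ∈ T, vecMulVec (ζ t) (ζ t) with hSz
  set SC : Matrix (Fin n) (Fin p × Fin n) ℝ := ∑ t ∈ T, vecMulVec (z t) (ζ t) with hSC
  set G0 : Matrix (Fin p × Fin n) (Fin p × Fin n) ℝ := c • Sz with hG0
  set C0 : Matrix (Fin n) (Fin p × Fin n) ℝ := c • SC with hC0
  set U : Matrix (Fin p × Fin n) (Fin p × Fin n) ℝ := underline p A with hU
  set Ar : Matrix (Fin n) (Fin r) ℝ := A * Ecol n r with hAr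
  set V : Matrix (Fin p × Fin n) (Fin p × Fin r) ℝ := underline p Ar with hV
  have hGdet : IsUnit G0.det := hinvFull
  have hUU' : U * Uᵀ = 1 := underline_mul_transpose A hA'
  have hU'U : Uᵀ * U = 1 := underline_transpose_mul A hA
  -- the inverse of the rotated Gram matrix
  have hinv : (Uᵀ * G0 * U)⁻¹ = Uᵀ * G0⁻¹ * U := by
    apply Matrix.inv_eq_right_inv
    calc Uᵀ * G0 * U * (Uᵀ * G0⁻¹ * U)
        = Uᵀ * G0 * (U * Uᵀ) * G0⁻¹ * U := by simp only [Matrix.mul_assoc]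
      _ = Uᵀ * (G0 * G0⁻¹) * U := by rw [hUU']; simp only [Matrix.mul_assoc, Matrix.one_mul]
      _ = Uᵀ * U := by rw [Matrix.mul_nonsing_inv _ hGdet, Matrix.mul_one]
      _ = 1 := hU'U
  -- the RHS predictor is the full least-squares predictor
  have hRHS : (Ecol n r)ᵀ * Bcoef T p z A * Uᵀ = Arᵀ * C0 * G0⁻¹ := by
    show (Ecol n r)ᵀ * (Aᵀ * C0 * U * (Uᵀ * G0 * U)⁻¹) * Uᵀ = Arᵀ * C0 * G0⁻¹
    rw [hinv, hAr, Matrix.transpose_mul]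
    calc (Ecol n r)ᵀ * (Aᵀ * C0 * U * (Uᵀ * G0⁻¹ * U)) * Uᵀ
        = (Ecol n r)ᵀ * Aᵀ * C0 * (U * Uᵀ) * G0⁻¹ * (U * Uᵀ) := by
          simp only [Matrix.mul_assoc]
      _ = (Ecol n r)ᵀ * Aᵀ * C0 * G0⁻¹ := by
          rw [hUU', Matrix.mul_one, Matrix.mul_one]
  -- normal equations for the full least-squares predictor of the reduced signal
  have hCy : ∑ t ∈ T, vecMulVec (Arᵀ.mulVec (z t)) (ζ t) = Arᵀ * SC := by
    rw [hSC, Matrix.mul_sum]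
    exact Finset.sum_congr rfl fun t _ => vecMulVec_mulVec' _ _ _
  have hNormal : (Arᵀ * C0 * G0⁻¹) * Sz = ∑ t ∈ T, vecMulVec (Arᵀ.mulVec (z t)) (ζ t) := by
    rw [hCy]
    have h1 : (Arᵀ * C0 * G0⁻¹) * G0 = Arᵀ * C0 :=
      Matrix.nonsing_inv_mul_cancel_right _ _ hGdet
    have h2 : c • ((Arᵀ * C0 * G0⁻¹) * Sz) = c • (Arᵀ * SC) := by
      calc c • ((Arᵀ * C0 * G0⁻¹) * Sz) = (Arᵀ * C0 * G0⁻¹) * (c • Sz) :=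
            (Matrix.mul_smul _ _ _).symm
        _ = (Arᵀ * C0 * G0⁻¹) * G0 := by rw [← hG0]
        _ = Arᵀ * C0 := h1
        _ = c • (Arᵀ * SC) := by rw [hC0, Matrix.mul_smul]
    exact smul_right_injective _ hc h2
  -- rewrite the two predictions
  have hL : ∀ t, (Bcoef T p z Ar).mulVec (zetaHist p (fun s => Arᵀ.mulVec (z s)) t)
      = (Bcoef T p z Ar * Vᵀ).mulVec (ζ t) := by
    intro t
    rw [hist_eq, Matrix.mulVec_mulVec]
  have hR : ∀ t, (Ecol n r)ᵀ.mulVec ((Bcoef T p z A).mulVec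
      (zetaHist p (fun s => Aᵀ.mulVec (z s)) t))
      = (Arᵀ * C0 * G0⁻¹).mulVec (ζ t) := by
    intro t
    rw [hist_eq, Matrix.mulVec_mulVec, Matrix.mulVec_mulVec, Matrix.mul_assoc, ← hRHS,
      Matrix.mul_assoc]
  simp only [hL, hR]
  have hmain := ls_opt T (fun t => Arᵀ.mulVec (z t)) ζ (Arᵀ * C0 * G0⁻¹)
    (Bcoef T p z Ar * Vᵀ) hNormal
  have hcpos : (0:ℝ) ≤ c := by
    rw [hcdef]; positivity
  exact mul_le_mul_of_nonneg_left hmain hcpos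
end

section
/- Relaxation Gap Theorem: Let err be the optimal fitting error of a prediction model class that is projective orthogonal agnostic and information consistent. Suppose there exist r ≤ n and A* ∈ O(n) with err((A*_r)^T z) = 0, and no larger r̃ > r admits an orthogonal A with err((A_r̃)^T z) = 0, and the global solution A^(0) of the relaxed problem min_{A ∈ O(n)} ⟨‖A_r^T (z − g*_z(hist_z))‖²⟩ has a well-defined r-dimensional best subspace. Then err((A^(0)_r)^T z) = 0. -/
/-!
Information consistency bounds the relaxed objective at `A*` by the optimal error of `A*_rᵀ z`,
which is zero; as the relaxed objective is nonnegative, `A*` is a global solution of the relaxed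
problem. Uniqueness of the best subspace then gives `A⁽⁰⁾ = A* · diag(Ã, ·)` with `Ã ∈ O(r)`, so
`A⁽⁰⁾_rᵀ z = Ãᵀ (A*_rᵀ z)`. Projective orthogonal agnosticity in dimension `r`, applied to the
rotation `Ã`, reduces the optimal error of this signal to that of `A*_rᵀ z` with the prediction
rotated by `Ãᵀ`, and the squared error is invariant under that rotation.
-/

open Matrix

/-- The p-step history matrix of a signal. -/
def Hist (p : ℕ) {k : ℕ} (m : ℤ → Fin k → ℝ) (t : ℤ) : Matrix (Fin k) (Fin p) ℝ :=
  Matrix.of fun i j => m (t - ((j : ℕ) + 1)) i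

/-- err(g, m, H) := ⟨‖m(t) − g(H(t))‖²⟩ over the training set T. -/
noncomputable def Err (T : Finset ℤ) {k k' p : ℕ}
    (g : Matrix (Fin k') (Fin p) ℝ → Fin k → ℝ)
    (m : ℤ → Fin k → ℝ) (H : ℤ → Matrix (Fin k') (Fin p) ℝ) : ℝ :=
  (T.card : ℝ)⁻¹ * ∑ t ∈ T, ∑ i, (m t i - g (H t) i) ^ 2

lemma Ecol_self (k : ℕ) : Ecol k k = 1 := by
  ext i j
  simp [Ecol, one_apply, Fin.ext_iff]

lemma Ecol_eq_reindex_fromRows {n r : ℕ} (h : r ≤ n) :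
    Ecol n r = reindex (finSumFinEquiv.trans (finCongr (Nat.add_sub_cancel' h))) (Equiv.refl _)
      (fromRows 1 (0 : Matrix (Fin (n - r)) (Fin r) ℝ)) := by
  ext i j
  obtain ⟨x, rfl⟩ := (finSumFinEquiv.trans (finCongr (Nat.add_sub_cancel' h))).surjective i
  rcases x with a | b
  · simp [Ecol, one_apply, Fin.ext_iff]
  · have : r + (b : ℕ) ≠ j := by omega
    simp [Ecol, this]

lemma reindex_fromBlocks_mul_Ecol {n r : ℕ} (h : r ≤ n) (B₁₁ : Matrix (Fin r) (Fin r) ℝ)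
    (B₁₂ : Matrix (Fin r) (Fin (n - r)) ℝ) (B₂₂ : Matrix (Fin (n - r)) (Fin (n - r)) ℝ) :
    reindex (finSumFinEquiv.trans (finCongr (Nat.add_sub_cancel' h)))
        (finSumFinEquiv.trans (finCongr (Nat.add_sub_cancel' h))) (fromBlocks B₁₁ B₁₂ 0 B₂₂) *
      Ecol n r = Ecol n r * B₁₁ := by
  rw [Ecol_eq_reindex_fromRows h, reindex_apply, reindex_apply, submatrix_mul_equiv,
    fromBlocks_mul_fromRows]
  ext i j
  obtain ⟨x | x, rfl⟩ := (finSumFinEquiv.trans (finCongr (Nat.add_sub_cancel' h))).surjective i <;>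
    simp [mul_apply, one_apply]

lemma sum_sq_mulVec_of_transpose_mul_eq_one {k k' : ℕ} {Q : Matrix (Fin k') (Fin k) ℝ}
    (hQ : Qᵀ * Q = 1) (v : Fin k → ℝ) : ∑ i, (Q *ᵥ v) i ^ 2 = ∑ i, v i ^ 2 := by
  simp only [sq]
  change (Q *ᵥ v) ⬝ᵥ (Q *ᵥ v) = v ⬝ᵥ v
  rw [dotProduct_mulVec, ← mulVec_transpose, mulVec_mulVec, hQ, one_mulVec, dotProduct_comm]

lemma Hist_mulVec (p : ℕ) {k k' : ℕ} (A : Matrix (Fin k') (Fin k) ℝ) (w : ℤ → Fin k → ℝ)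
    (t : ℤ) : Hist p (fun s => A *ᵥ w s) t = A * Hist p w t := by
  ext i j
  simp [Hist, mul_apply, mulVec, dotProduct]

section Err

variable (T : Finset ℤ) {k k' p : ℕ}

lemma Err_nonneg (g : Matrix (Fin k') (Fin p) ℝ → Fin k → ℝ) (m : ℤ → Fin k → ℝ)
    (H : ℤ → Matrix (Fin k') (Fin p) ℝ) : 0 ≤ Err T g m H :=
  mul_nonneg (by positivity) <|
    Finset.sum_nonneg fun _ _ => Finset.sum_nonneg fun _ _ => sq_nonneg _

lemma Err_mulVec_of_transpose_mul_eq_one {k'' : ℕ} {Q : Matrix (Fin k'') (Fin k) ℝ}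
    (hQ : Qᵀ * Q = 1) (g : Matrix (Fin k') (Fin p) ℝ → Fin k → ℝ) (m : ℤ → Fin k → ℝ)
    (H : ℤ → Matrix (Fin k') (Fin p) ℝ) :
    Err T (fun X => Q *ᵥ g X) (fun t => Q *ᵥ m t) H = Err T g m H := by
  unfold Err
  congr 1
  refine Finset.sum_congr rfl fun t _ => ?_
  simp only [← Pi.sub_apply, ← mulVec_sub]
  exact sum_sq_mulVec_of_transpose_mul_eq_one hQ _

end Err

theorem stmt13_general (n p r : ℕ) (hrn : r ≤ n) (T : Finset ℤ)
    (gstar : (k : ℕ) → (ℤ → Fin k → ℝ) → Matrix (Fin k) (Fin p) ℝ → Fin k → ℝ)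
    (z : ℤ → Fin n → ℝ)
    -- projective orthogonal agnosticity of the model, for all signals and dimensions
    (hproj : ∀ (k r' : ℕ), r' ≤ k → ∀ A : Matrix (Fin k) (Fin k) ℝ,
      Aᵀ * A = 1 → A * Aᵀ = 1 → ∀ w : ℤ → Fin k → ℝ,
      Err T (fun H => (Ecol k r')ᵀ.mulVec (gstar k (fun t => Aᵀ.mulVec (w t)) H))
          (fun t => (A * Ecol k r')ᵀ.mulVec (w t)) (fun t => Aᵀ * Hist p w t)
        = Err T (fun H => (A * Ecol k r')ᵀ.mulVec (gstar k w H))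
          (fun t => (A * Ecol k r')ᵀ.mulVec (w t)) (Hist p w))
    -- information consistency of the model, for all signals and dimensions
    (hinfo : ∀ (k r' : ℕ), r' ≤ k → ∀ A : Matrix (Fin k) (Fin k) ℝ,
      Aᵀ * A = 1 → A * Aᵀ = 1 → ∀ w : ℤ → Fin k → ℝ,
      Err T (gstar r' (fun t => (A * Ecol k r')ᵀ.mulVec (w t)))
          (fun t => (A * Ecol k r')ᵀ.mulVec (w t))
          (Hist p (fun t => (A * Ecol k r')ᵀ.mulVec (w t)))
        ≥ Err T (fun H => (A * Ecol k r')ᵀ.mulVec (gstar k w H))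
          (fun t => (A * Ecol k r')ᵀ.mulVec (w t)) (Hist p w))
    -- A* extracts an r-dimensional signal of zero optimal error
    (Astar : Matrix (Fin n) (Fin n) ℝ) (hAstar : Astarᵀ * Astar = 1)
    (hAstar' : Astar * Astarᵀ = 1)
    (hzero : Err T (gstar r (fun t => (Astar * Ecol n r)ᵀ.mulVec (z t)))
        (fun t => (Astar * Ecol n r)ᵀ.mulVec (z t))
        (Hist p (fun t => (Astar * Ecol n r)ᵀ.mulVec (z t))) = 0)
    (A0 : Matrix (Fin n) (Fin n) ℝ)
    -- well-defined best subspace: every global solution differs from A⁽⁰⁾ by Ã ∈ O(r, n−r)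
    (hlem1 : ∀ B : Matrix (Fin n) (Fin n) ℝ, Bᵀ * B = 1 → B * Bᵀ = 1 →
      (∀ A : Matrix (Fin n) (Fin n) ℝ, Aᵀ * A = 1 → A * Aᵀ = 1 →
        Err T (fun H => (B * Ecol n r)ᵀ.mulVec (gstar n z H))
            (fun t => (B * Ecol n r)ᵀ.mulVec (z t)) (Hist p z)
          ≤ Err T (fun H => (A * Ecol n r)ᵀ.mulVec (gstar n z H))
            (fun t => (A * Ecol n r)ᵀ.mulVec (z t)) (Hist p z)) →
      ∃ (Arr : Matrix (Fin r) (Fin r) ℝ) (Ass : Matrix (Fin (n - r)) (Fin (n - r)) ℝ),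
        Arrᵀ * Arr = 1 ∧ Arr * Arrᵀ = 1 ∧ Assᵀ * Ass = 1 ∧ Ass * Assᵀ = 1 ∧
        A0 = B * Matrix.reindex (finSumFinEquiv.trans (finCongr (Nat.add_sub_cancel' hrn)))
            (finSumFinEquiv.trans (finCongr (Nat.add_sub_cancel' hrn)))
            (Matrix.fromBlocks Arr 0 0 Ass)) :
    Err T (gstar r (fun t => (A0 * Ecol n r)ᵀ.mulVec (z t)))
        (fun t => (A0 * Ecol n r)ᵀ.mulVec (z t))
        (Hist p (fun t => (A0 * Ecol n r)ᵀ.mulVec (z t))) = 0 := by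
  set w : ℤ → Fin r → ℝ := fun t => (Astar * Ecol n r)ᵀ *ᵥ z t
  have hrelaxed : Err T (fun H => (Astar * Ecol n r)ᵀ *ᵥ gstar n z H)
      (fun t => (Astar * Ecol n r)ᵀ *ᵥ z t) (Hist p z) = 0 :=
    le_antisymm (hzero ▸ hinfo n r hrn Astar hAstar hAstar' z) (Err_nonneg ..)
  obtain ⟨Arr, Ass, hArr, hArr', -, -, hA0⟩ :=
    hlem1 Astar hAstar hAstar' fun A _ _ => hrelaxed ▸ Err_nonneg ..
  have hsignal : (fun t => (A0 * Ecol n r)ᵀ *ᵥ z t) = fun t => Arrᵀ *ᵥ w t := by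
    ext t : 1
    rw [hA0, Matrix.mul_assoc, reindex_fromBlocks_mul_Ecol hrn, ← Matrix.mul_assoc, transpose_mul,
      ← mulVec_mulVec]
  have hagnostic := hproj r r le_rfl Arr hArr hArr' w
  simp only [Ecol_self, Matrix.mul_one, transpose_one, one_mulVec] at hagnostic
  rw [hsignal, funext (Hist_mulVec p Arrᵀ w), hagnostic,
    Err_mulVec_of_transpose_mul_eq_one T (by rwa [transpose_transpose])]
  exact hzero

/-- Relaxation Gap Theorem: for a prediction model (given by its optimal
predictors g*) that is projective orthogonal agnostic and information consistent, if some
A* ∈ O(n) extracts an r-dimensional signal with zero optimal prediction error, no larger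
dimension admits zero error, and the global solution A⁽⁰⁾ of the relaxed problem has a
well-defined best r-dimensional subspace (every global solution differs from A⁽⁰⁾ by a
factor in O(r, n−r)), then the signal extracted by A⁽⁰⁾ also has zero optimal error. -/
theorem stmt13 (n p r : ℕ) (hrn : r ≤ n) (T : Finset ℤ) (hT : T.Nonempty)
    (gstar : (k : ℕ) → (ℤ → Fin k → ℝ) → Matrix (Fin k) (Fin p) ℝ → Fin k → ℝ)
    (z : ℤ → Fin n → ℝ)
    -- projective orthogonal agnosticity of the model, for all signals and dimensions
    (hproj : ∀ (k r' : ℕ), r' ≤ k → ∀ A : Matrix (Fin k) (Fin k) ℝ,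
      Aᵀ * A = 1 → A * Aᵀ = 1 → ∀ w : ℤ → Fin k → ℝ,
      Err T (fun H => (Ecol k r')ᵀ.mulVec (gstar k (fun t => Aᵀ.mulVec (w t)) H))
          (fun t => (A * Ecol k r')ᵀ.mulVec (w t)) (fun t => Aᵀ * Hist p w t)
        = Err T (fun H => (A * Ecol k r')ᵀ.mulVec (gstar k w H))
          (fun t => (A * Ecol k r')ᵀ.mulVec (w t)) (Hist p w))
    -- information consistency of the model, for all signals and dimensions
    (hinfo : ∀ (k r' : ℕ), r' ≤ k → ∀ A : Matrix (Fin k) (Fin k) ℝ,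
      Aᵀ * A = 1 → A * Aᵀ = 1 → ∀ w : ℤ → Fin k → ℝ,
      Err T (gstar r' (fun t => (A * Ecol k r')ᵀ.mulVec (w t)))
          (fun t => (A * Ecol k r')ᵀ.mulVec (w t))
          (Hist p (fun t => (A * Ecol k r')ᵀ.mulVec (w t)))
        ≥ Err T (fun H => (A * Ecol k r')ᵀ.mulVec (gstar k w H))
          (fun t => (A * Ecol k r')ᵀ.mulVec (w t)) (Hist p w))
    -- A* extracts an r-dimensional signal of zero optimal error
    (Astar : Matrix (Fin n) (Fin n) ℝ) (hAstar : Astarᵀ * Astar = 1)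
    (hAstar' : Astar * Astarᵀ = 1)
    (hzero : Err T (gstar r (fun t => (Astar * Ecol n r)ᵀ.mulVec (z t)))
        (fun t => (Astar * Ecol n r)ᵀ.mulVec (z t))
        (Hist p (fun t => (Astar * Ecol n r)ᵀ.mulVec (z t))) = 0)
    -- no larger dimension admits zero optimal error
    (hmax : ∀ rt : ℕ, r < rt → rt ≤ n → ∀ A : Matrix (Fin n) (Fin n) ℝ,
      Aᵀ * A = 1 → A * Aᵀ = 1 →
      Err T (gstar rt (fun t => (A * Ecol n rt)ᵀ.mulVec (z t)))
          (fun t => (A * Ecol n rt)ᵀ.mulVec (z t))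
          (Hist p (fun t => (A * Ecol n rt)ᵀ.mulVec (z t))) ≠ 0)
    -- A⁽⁰⁾ is a global solution of the relaxed problem
    (A0 : Matrix (Fin n) (Fin n) ℝ) (hA0 : A0ᵀ * A0 = 1) (hA0' : A0 * A0ᵀ = 1)
    (hA0min : ∀ A : Matrix (Fin n) (Fin n) ℝ, Aᵀ * A = 1 → A * Aᵀ = 1 →
      Err T (fun H => (A0 * Ecol n r)ᵀ.mulVec (gstar n z H))
          (fun t => (A0 * Ecol n r)ᵀ.mulVec (z t)) (Hist p z)
        ≤ Err T (fun H => (A * Ecol n r)ᵀ.mulVec (gstar n z H))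
          (fun t => (A * Ecol n r)ᵀ.mulVec (z t)) (Hist p z))
    -- well-defined best subspace: every global solution differs from A⁽⁰⁾ by Ã ∈ O(r, n−r)
    (hlem1 : ∀ B : Matrix (Fin n) (Fin n) ℝ, Bᵀ * B = 1 → B * Bᵀ = 1 →
      (∀ A : Matrix (Fin n) (Fin n) ℝ, Aᵀ * A = 1 → A * Aᵀ = 1 →
        Err T (fun H => (B * Ecol n r)ᵀ.mulVec (gstar n z H))
            (fun t => (B * Ecol n r)ᵀ.mulVec (z t)) (Hist p z)
          ≤ Err T (fun H => (A * Ecol n r)ᵀ.mulVec (gstar n z H))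
            (fun t => (A * Ecol n r)ᵀ.mulVec (z t)) (Hist p z)) →
      ∃ (Arr : Matrix (Fin r) (Fin r) ℝ) (Ass : Matrix (Fin (n - r)) (Fin (n - r)) ℝ),
        Arrᵀ * Arr = 1 ∧ Arr * Arrᵀ = 1 ∧ Assᵀ * Ass = 1 ∧ Ass * Assᵀ = 1 ∧
        A0 = B * Matrix.reindex (finSumFinEquiv.trans (finCongr (Nat.add_sub_cancel' hrn)))
            (finSumFinEquiv.trans (finCongr (Nat.add_sub_cancel' hrn)))
            (Matrix.fromBlocks Arr 0 0 Ass)) :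
    Err T (gstar r (fun t => (A0 * Ecol n r)ᵀ.mulVec (z t)))
        (fun t => (A0 * Ecol n r)ᵀ.mulVec (z t))
        (Hist p (fun t => (A0 * Ecol n r)ᵀ.mulVec (z t))) = 0 :=
  stmt13_general n p r hrn T gstar z hproj hinfo Astar hAstar hAstar' hzero A0 hlem1
end
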